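/- For every integer d2 ≥ 5, writing A = A(1,d2) and B = B(1,d2), one has (3(d2+2)A − 2 − d2·B)·(1 − B)^{d2/2} < 2·((d2+2)A − 1)·(1 − A)^{(d2+2)/2}. -/

import Mathlib

/-- Upper endpoint `A(d1,d2)`. -/
noncomputable def Aval (d1 d2 : ℕ) : ℝ :=
  (d1 : ℝ) / (d1 + d2 * (1 + Real.sqrt (2 * ((d1 : ℝ) + d2) / (d1 * ((d2 : ℝ) - 2))))⁻¹)

/-- Upper endpoint `B(d1,d2)`. -/
noncomputable def Bval (d1 d2 : ℕ) : ℝ :=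
  (d1 : ℝ) / (d1 + ((d2 : ℝ) - 2) *
    (1 + Real.sqrt (2 * ((d1 : ℝ) + d2 - 2) / (d1 * ((d2 : ℝ) - 4))))⁻¹)

/-!
With `s(x) = √(2(x+1)/(x-2))` and `a(x) = (1 + s(x))/(x + 1 + s(x))` one has `A(1,d) = a(d)` and
`B(1,d) = a(d-2)`. Put `P = (1 - a(d-2))^{d/2}` and `Q = (1 - a(d))^{(d+2)/2}`. The left factor is
`2((d+2)a(d) - 1) + ((d+2)a(d) - d·a(d-2))`, and the second summand is `≤ 0` because
`s(d-2)^2 - s(d)^2 = 12/((d-2)(d-4))` is large enough. So it remains to show `P < Q`.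
Since `1/(1 - a(x)) = 1 + c/x` with `c = 1 + s(x) < 4`, this is
`(d+2) log(1 + c/d) < d log(1 + c'/(d-2))` with `c' = 1 + s(d-2) ≥ c`, which follows from
`x ↦ (x+2) log(1 + c/x)` being decreasing: its derivative is negative by `log u ≤ sinh (log u)`.
-/

open Real Set

lemma Real.log_le_sub_inv_div_two {x : ℝ} (hx : 1 ≤ x) : log x ≤ (x - x⁻¹) / 2 :=
  (self_le_sinh_iff.2 (log_nonneg hx)).trans_eq (sinh_log (by linarith))

lemma strictAntiOn_add_two_mul_log_one_add_div {c : ℝ} (hc0 : 0 < c) (hc : c < 4) :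
    StrictAntiOn (fun x ↦ (x + 2) * log (1 + c / x)) (Ioi 0) := by
  have hderiv : ∀ x ∈ Ioi (0 : ℝ), HasDerivAt (fun x ↦ (x + 2) * log (1 + c / x))
      (log (1 + c / x) - (x + 2) * c / (x * (x + c))) x := by
    intro x (hx : 0 < x)
    have hlog : HasDerivAt (fun x ↦ log (1 + c / x)) (-c / x ^ 2 / (1 + c / x)) x := by
      have := ((hasDerivAt_inv hx.ne').const_mul c).const_add 1
      simp only [← div_eq_mul_inv] at this
      refine (this.log (by positivity)).congr_deriv ?_
      ring
    refine (((hasDerivAt_id' x).add_const 2).mul hlog).congr_deriv ?_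
    field_simp
    ring
  refine strictAntiOn_of_deriv_neg (convex_Ioi 0)
    (fun x hx ↦ (hderiv x hx).continuousAt.continuousWithinAt) fun x hx ↦ ?_
  rw [interior_Ioi, mem_Ioi] at hx
  rw [(hderiv x hx).deriv, sub_neg]
  refine (log_le_sub_inv_div_two (by have := div_pos hc0 hx; linarith)).trans_lt ?_
  rw [div_lt_div_iff₀ two_pos (by positivity)]
  field_simp
  nlinarith

noncomputable def aOneRoot (x : ℝ) : ℝ := √(2 * (x + 1) / (x - 2))

lemma aOneRoot_nonneg (x : ℝ) : 0 ≤ aOneRoot x := sqrt_nonneg _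

noncomputable def aOne (x : ℝ) : ℝ := (1 + aOneRoot x) / (x + 1 + aOneRoot x)

lemma Aval_one_eq (d : ℕ) : Aval 1 d = aOne d := by
  have hs := aOneRoot_nonneg d
  rw [Aval, aOne, aOneRoot, Nat.cast_one, one_mul, add_comm (1 : ℝ) d]
  field_simp
  ring

lemma Bval_one_eq (d : ℕ) : Bval 1 d = aOne (d - 2) := by
  have hs := aOneRoot_nonneg (d - 2)
  rw [Bval, aOne, aOneRoot, Nat.cast_one, one_mul,
    show (1 : ℝ) + d - 2 = d - 2 + 1 by ring, show (d : ℝ) - 4 = d - 2 - 2 by ring]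
  field_simp
  ring

lemma aOneRoot_sq_mul {x : ℝ} (hx : 2 < x) : aOneRoot x ^ 2 * (x - 2) = 2 * (x + 1) := by
  rw [aOneRoot, sq_sqrt (div_nonneg (by linarith) (by linarith)),
    div_mul_cancel₀ _ (by linarith : x - 2 ≠ 0)]

lemma aOneRoot_antitoneOn : AntitoneOn aOneRoot (Ioi 2) := by
  intro x (hx : 2 < x) y (hy : 2 < y) hxy
  refine sqrt_le_sqrt ?_
  rw [div_le_div_iff₀ (by linarith) (by linarith)]
  nlinarith

lemma aOneRoot_le_aOneRoot_sub_two {x : ℝ} (hx : 4 < x) : aOneRoot x ≤ aOneRoot (x - 2) :=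
  aOneRoot_antitoneOn (mem_Ioi.2 (by linarith)) (mem_Ioi.2 (by linarith)) (by linarith)

lemma aOneRoot_lt_three {x : ℝ} (hx : 3 ≤ x) : aOneRoot x < 3 := by
  have hs0 := aOneRoot_nonneg x
  have hs := aOneRoot_sq_mul (by linarith : 2 < x)
  have h9 : aOneRoot x ^ 2 < 9 := by nlinarith
  nlinarith

lemma one_lt_add_two_mul_aOne {x : ℝ} (hx : 0 ≤ x) : 1 < (x + 2) * aOne x := by
  have hs := aOneRoot_nonneg x
  rw [aOne, mul_div_assoc', one_lt_div (by positivity)]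
  nlinarith

lemma add_two_mul_aOne_le {x : ℝ} (hx : 5 ≤ x) : (x + 2) * aOne x ≤ x * aOne (x - 2) := by
  set s := aOneRoot x
  set t := aOneRoot (x - 2)
  have hs0 : 0 ≤ s := aOneRoot_nonneg x
  have ht0 : 0 ≤ t := aOneRoot_nonneg (x - 2)
  have hs : s ^ 2 * (x - 2) = 2 * (x + 1) := aOneRoot_sq_mul (by linarith)
  have ht : t ^ 2 * (x - 4) = 2 * (x - 1) := by
    linear_combination aOneRoot_sq_mul (by linarith : 2 < x - 2)
  have hst : s ≤ t := aOneRoot_le_aOneRoot_sub_two (by linarith)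
  have ht3 : t < 3 := aOneRoot_lt_three (by linarith)
  have hs2 : 2 ≤ s ^ 2 := by nlinarith
  set K := (t + s) * ((x - 2) * (x - 4))
  have hK : 0 < K := mul_pos (by nlinarith) (mul_pos (by linarith) (by linarith))
  have hdiff : (t - s) * K = 12 := by linear_combination (x - 2) * ht - (x - 4) * hs
  have hbound : 2 * (s * t - 1) * K < (x ^ 2 - 2) * 12 := by
    have h1 : (s * t - 1) * (t + s) ≤ (t ^ 2 - 1) * (2 * t) :=
      mul_le_mul (by nlinarith) (by linarith) (by linarith) (by nlinarith)
    have h2 : (t ^ 2 - 1) * (x - 4) = x + 2 := by linear_combination ht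
    calc 2 * (s * t - 1) * K = 2 * ((s * t - 1) * (t + s)) * ((x - 2) * (x - 4)) := by ring
      _ ≤ 2 * ((t ^ 2 - 1) * (2 * t)) * ((x - 2) * (x - 4)) := by gcongr; nlinarith
      _ = 4 * t * (x + 2) * (x - 2) := by linear_combination (4 * t * (x - 2)) * h2
      _ < (x ^ 2 - 2) * 12 := by nlinarith
  -- cleared of denominators, the claim is exactly `key`
  have key : 0 < (x ^ 2 - 2) * (t - s) - 2 * (s * t - 1) := by
    refine pos_of_mul_pos_left ?_ hK.le
    have : ((x ^ 2 - 2) * (t - s) - 2 * (s * t - 1)) * K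
        = (x ^ 2 - 2) * ((t - s) * K) - 2 * (s * t - 1) * K := by ring
    rw [this, hdiff]
    linarith
  simp only [aOne, mul_div_assoc']
  rw [div_le_div_iff₀ (by positivity) (by linarith)]
  linear_combination key.le

lemma one_sub_aOne {x : ℝ} (hx : 0 < x) : 1 - aOne x = (1 + (1 + aOneRoot x) / x)⁻¹ := by
  have hs := aOneRoot_nonneg x
  rw [aOne]
  field_simp
  ring

lemma one_sub_aOne_pos {x : ℝ} (hx : 0 < x) : 0 < 1 - aOne x := by
  have hs := aOneRoot_nonneg x
  rw [one_sub_aOne hx]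
  positivity

lemma one_sub_aOne_rpow_lt {x : ℝ} (hx : 5 ≤ x) :
    (1 - aOne (x - 2)) ^ (x / 2) < (1 - aOne x) ^ ((x + 2) / 2) := by
  have hx2 : 0 < x - 2 := by linarith
  rw [one_sub_aOne (x := x) (by linarith), one_sub_aOne hx2]
  set c := 1 + aOneRoot x
  set c' := 1 + aOneRoot (x - 2)
  have hc : 0 < c := by linarith [aOneRoot_nonneg x]
  have hcc' : c ≤ c' := by linarith [aOneRoot_le_aOneRoot_sub_two (x := x) (by linarith)]
  have hc4 : c < 4 := by linarith [aOneRoot_lt_three (x := x) (by linarith)]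
  have hu : 0 < 1 + c / x := by positivity
  have hv : 0 < 1 + c' / (x - 2) := by have := hc.trans_le hcc'; positivity
  have hlog : (x + 2) * log (1 + c / x) < x * log (1 + c' / (x - 2)) :=
    calc (x + 2) * log (1 + c / x) < (x - 2 + 2) * log (1 + c / (x - 2)) :=
          strictAntiOn_add_two_mul_log_one_add_div hc hc4 hx2 (mem_Ioi.2 (by linarith)) (by linarith)
      _ ≤ x * log (1 + c' / (x - 2)) := by
          rw [sub_add_cancel]
          gcongr
  rw [inv_rpow hv.le, inv_rpow hu.le, inv_lt_inv₀ (by positivity) (by positivity),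
    rpow_def_of_pos hu, rpow_def_of_pos hv, exp_lt_exp]
  linarith

theorem key_inequality_d1_eq_one (d2 : ℕ) (hd2 : 5 ≤ d2) :
    (3 * ((d2 : ℝ) + 2) * Aval 1 d2 - 2 - (d2 : ℝ) * Bval 1 d2) *
        (1 - Bval 1 d2) ^ ((d2 : ℝ) / 2) <
      2 * (((d2 : ℝ) + 2) * Aval 1 d2 - 1) * (1 - Aval 1 d2) ^ (((d2 : ℝ) + 2) / 2) := by
  have hn : (5 : ℝ) ≤ d2 := by exact_mod_cast hd2
  rw [Aval_one_eq, Bval_one_eq]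
  have hA := one_lt_add_two_mul_aOne (x := d2) (by positivity)
  have hAB := add_two_mul_aOne_le hn
  have hP := rpow_pos_of_pos (one_sub_aOne_pos (x := d2 - 2) (by linarith)) ((d2 : ℝ) / 2)
  calc (3 * ((d2 : ℝ) + 2) * aOne d2 - 2 - d2 * aOne (d2 - 2)) * (1 - aOne (d2 - 2)) ^ ((d2 : ℝ) / 2)
      ≤ 2 * ((d2 + 2) * aOne d2 - 1) * (1 - aOne (d2 - 2)) ^ ((d2 : ℝ) / 2) :=
        mul_le_mul_of_nonneg_right (by linarith) hP.le
    _ < 2 * ((d2 + 2) * aOne d2 - 1) * (1 - aOne d2) ^ (((d2 : ℝ) + 2) / 2) :=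
        mul_lt_mul_of_pos_left (one_sub_aOne_rpow_lt hn) (by linarith)
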